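/- arXiv:2105.05106 — 2 statements merged into one kernel-verified Lean document; each statement's English description precedes it below -/
import Mathlib

section
/- (Gaussian example, known covariance.) Let Σ be a symmetric positive definite k×k real matrix and let μ be a probability measure on ℝ^k (the prior law of the mean vector M). Let f(y|m) = ((2π)^k det Σ)^{-1/2} exp(−(1/2)(y−m)ᵀ Σ^{-1} (y−m)) be the N(m, Σ) density, let f_Y(y) = ∫ f(y|m) dμ(m), and assume 0 < f_Y(y) < ∞ for all y ∈ ℝ^k. Let g : ℝ^k → ℝ^p be measurable (g(m) represents E[U|M=m] for a Markov chain U ↔ M ↔ Y), and assume that for every y there exist a neighborhood N of y and a μ-integrable ψ with (1 + ‖g(m)‖)(1 + ‖m‖) f(y'|m) ≤ ψ(m) for all y' ∈ N and all m. Then F(y) := E[g(M)|Y=y] is differentiable and for every y, i ∈ {1,…,p}, j ∈ {1,…,k}: ∂F_i/∂y_j (y) = Σ_{l=1}^k (Σ^{-1})_{j,l} · Cov( M_l, g_i(M) | Y = y ); i.e., J_y E[U|Y=y] = Σ^{-1} · Cov(M, U | Y=y). -/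
open MeasureTheory Matrix ContinuousLinearMap

variable {k : ℕ}

/-- The continuous linear functional `w ↦ u ⬝ᵥ (A *ᵥ w)`. -/
noncomputable def ellCLM (A : Matrix (Fin k) (Fin k) ℝ) (u : Fin k → ℝ) :
    (Fin k → ℝ) →L[ℝ] ℝ :=
  LinearMap.toContinuousLinearMap
  { toFun := fun w => u ⬝ᵥ (A *ᵥ w)
    map_add' := fun a b => by simp [Matrix.mulVec_add, dotProduct_add]
    map_smul' := fun c a => by simp [Matrix.mulVec_smul, dotProduct_smul] }

lemma ellCLM_apply (A : Matrix (Fin k) (Fin k) ℝ) (u w : Fin k → ℝ) :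
    ellCLM A u w = u ⬝ᵥ (A *ᵥ w) := rfl

lemma ellCLM_continuous (A : Matrix (Fin k) (Fin k) ℝ) :
    Continuous (fun u => ellCLM A u) := by
  have : IsLinearMap ℝ (fun u => ellCLM A u) := by
    constructor
    · intro u v; ext w; simp [ellCLM_apply, add_dotProduct]
    · intro c u; ext w; simp [ellCLM_apply, smul_dotProduct]
  exact (this.mk' _).continuous_of_finiteDimensional

lemma ellCLM_norm_le (A : Matrix (Fin k) (Fin k) ℝ) (u : Fin k → ℝ) :
    ‖ellCLM A u‖ ≤ (∑ i, ∑ l, |A i l|) * ‖u‖ := by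
  apply ContinuousLinearMap.opNorm_le_bound
  · positivity
  · intro w
    rw [ellCLM_apply]
    rw [dotProduct]
    calc |∑ i, u i * (A *ᵥ w) i| ≤ ∑ i, |u i * (A *ᵥ w) i| :=
          Finset.abs_sum_le_sum_abs _ _
      _ ≤ ∑ i, ∑ l, |A i l| * ‖u‖ * ‖w‖ := by
          apply Finset.sum_le_sum
          intro i _
          rw [abs_mul, mulVec, dotProduct]
          calc |u i| * |∑ l, A i l * w l| ≤ ‖u‖ * ∑ l, |A i l * w l| := by
                apply mul_le_mul (norm_le_pi_norm u i)
                  (Finset.abs_sum_le_sum_abs _ _) (abs_nonneg _) (norm_nonneg _)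
            _ = ∑ l, ‖u‖ * |A i l * w l| := Finset.mul_sum _ _ _
            _ ≤ ∑ l, |A i l| * ‖u‖ * ‖w‖ := by
                apply Finset.sum_le_sum
                intro l _
                rw [abs_mul]
                have h1 : |w l| ≤ ‖w‖ := norm_le_pi_norm w l
                calc ‖u‖ * (|A i l| * |w l|) = |A i l| * ‖u‖ * |w l| := by ring
                  _ ≤ |A i l| * ‖u‖ * ‖w‖ := by
                      apply mul_le_mul_of_nonneg_left h1
                      positivity
      _ = (∑ i, ∑ l, |A i l|) * ‖u‖ * ‖w‖ := by
          rw [Finset.sum_mul, Finset.sum_mul]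
          congr 1
          ext i
          rw [Finset.sum_mul, Finset.sum_mul]

lemma hasFDerivAt_quad (A : Matrix (Fin k) (Fin k) ℝ) (hA : A.IsSymm)
    (m y : Fin k → ℝ) :
    HasFDerivAt (fun y' : Fin k → ℝ => -(1 / 2) * ((y' - m) ⬝ᵥ (A *ᵥ (y' - m))))
      (-(ellCLM A (y - m))) y := by
  have h1 : (fun y' : Fin k → ℝ => -(1 / 2) * ((y' - m) ⬝ᵥ (A *ᵥ (y' - m))))
      = fun y' => ∑ i, ∑ l, (-(1 / 2) * A i l) * ((y' i - m i) * (y' l - m l)) := by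
    funext y'
    simp only [dotProduct, mulVec, Pi.sub_apply, Finset.mul_sum]
    refine Finset.sum_congr rfl fun i _ => Finset.sum_congr rfl fun l _ => by ring
  rw [h1]
  have hsum : HasFDerivAt
      (fun y' : Fin k → ℝ => ∑ i, ∑ l, (-(1 / 2) * A i l) * ((y' i - m i) * (y' l - m l)))
      (∑ i, ∑ l, (-(1 / 2) * A i l) •
        ((y i - m i) • proj l + (y l - m l) • proj i) : (Fin k → ℝ) →L[ℝ] ℝ) y := by
    apply HasFDerivAt.fun_sum
    intro i _
    apply HasFDerivAt.fun_sum
    intro l _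
    exact (((hasFDerivAt_apply i y).sub_const (m i)).mul
      ((hasFDerivAt_apply l y).sub_const (m l))).const_mul _
  convert hsum using 1
  ext w
  simp only [ContinuousLinearMap.neg_apply, ellCLM_apply, ContinuousLinearMap.sum_apply,
    ContinuousLinearMap.smul_apply, ContinuousLinearMap.add_apply, proj_apply,
    smul_eq_mul, dotProduct, mulVec, Pi.sub_apply]
  have swap : (∑ i, ∑ l, A i l * ((y l - m l) * w i))
      = ∑ i, ∑ l, A i l * ((y i - m i) * w l) := by
    rw [Finset.sum_comm]
    exact Finset.sum_congr rfl fun l _ => Finset.sum_congr rfl fun i _ => by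
      rw [hA.apply]
  have e1 : (∑ i, ∑ l, (-(1 / 2) * A i l) * ((y i - m i) * w l + (y l - m l) * w i))
      = -(1 / 2) * (∑ i, ∑ l, A i l * ((y i - m i) * w l))
        + -(1 / 2) * (∑ i, ∑ l, A i l * ((y l - m l) * w i)) := by
    rw [Finset.mul_sum, Finset.mul_sum, ← Finset.sum_add_distrib]
    refine Finset.sum_congr rfl fun i _ => ?_
    rw [Finset.mul_sum, Finset.mul_sum, ← Finset.sum_add_distrib]
    exact Finset.sum_congr rfl fun l _ => by ring
  have e2 : (∑ i, (y i - m i) * ∑ l, A i l * w l)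
      = ∑ i, ∑ l, A i l * ((y i - m i) * w l) := by
    refine Finset.sum_congr rfl fun i _ => ?_
    rw [Finset.mul_sum]
    exact Finset.sum_congr rfl fun l _ => by ring
  rw [e1, swap, e2]
  ring

lemma hasFDerivAt_gauss (A : Matrix (Fin k) (Fin k) ℝ) (hA : A.IsSymm)
    (c : ℝ) (m y : Fin k → ℝ) :
    HasFDerivAt
      (fun y' : Fin k → ℝ =>
        c * Real.exp (-(1 / 2) * ((y' - m) ⬝ᵥ (A *ᵥ (y' - m)))))
      ((-(c * Real.exp (-(1 / 2) * ((y - m) ⬝ᵥ (A *ᵥ (y - m)))))) • ellCLM A (y - m)) y := by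
  have h := ((hasFDerivAt_quad A hA m y).exp).const_mul c
  rw [smul_smul, smul_neg, ← neg_smul] at h
  exact h

set_option maxHeartbeats 1000000 in
/-- Gaussian example with known covariance (recovering the identity of
Dytso et al.): `J_y E[U|Y=y] = Σ⁻¹ Cov(M, U | Y=y)`, stated entrywise. -/
theorem stmt_15
    {k p : ℕ}
    (Sig : Matrix (Fin k) (Fin k) ℝ) (hSig : Sig.PosDef) (hSigSymm : Sig.IsSymm)
    (μ : Measure (Fin k → ℝ)) [IsProbabilityMeasure μ]
    (f : (Fin k → ℝ) → (Fin k → ℝ) → ℝ)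
    (hf : ∀ y m, f y m =
      (Real.sqrt ((2 * Real.pi) ^ k * Sig.det))⁻¹ *
        Real.exp (-(1 / 2) * ((y - m) ⬝ᵥ (Sig⁻¹ *ᵥ (y - m)))))
    (fY : (Fin k → ℝ) → ℝ)
    (hfY : ∀ y, fY y = ∫ m, f y m ∂μ)
    (hfYpos : ∀ y, 0 < fY y)
    (hfYfin : ∀ y, Integrable (fun m => f y m) μ)
    (g : (Fin k → ℝ) → (Fin p → ℝ)) (hg : Measurable g)
    (hdom : ∀ y : Fin k → ℝ, ∃ N ∈ nhds y, ∃ ψ : (Fin k → ℝ) → ℝ,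
      Integrable ψ μ ∧ ∀ y' ∈ N, ∀ m, (1 + ‖g m‖) * (1 + ‖m‖) * f y' m ≤ ψ m)
    (F : (Fin k → ℝ) → (Fin p → ℝ))
    (hF : ∀ y i, F y i = (∫ m, g m i * f y m ∂μ) / fY y) :
    ∀ y : Fin k → ℝ,
      DifferentiableAt ℝ F y ∧
      ∀ (i : Fin p) (j : Fin k),
        fderiv ℝ F y (Pi.single j 1) i =
          ∑ l, Sig⁻¹ j l *
            ((∫ m, m l * g m i * f y m ∂μ) / fY y
              - ((∫ m, m l * f y m ∂μ) / fY y)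
                * ((∫ m, g m i * f y m ∂μ) / fY y)) := by
  intro y
  -- basic facts
  have hA : (Sig⁻¹).IsSymm := by
    unfold Matrix.IsSymm
    rw [Matrix.transpose_nonsing_inv, hSigSymm.eq]
  have fnn : ∀ (x m : Fin k → ℝ), 0 ≤ f x m := fun x m => by rw [hf]; positivity
  have fcont : ∀ x, Continuous (fun m => f x m) := by
    intro x
    have : (fun m => f x m)
        = fun m => (Real.sqrt ((2 * Real.pi) ^ k * Sig.det))⁻¹ *
            Real.exp (-(1 / 2) * ((x - m) ⬝ᵥ (Sig⁻¹ *ᵥ (x - m)))) :=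
      funext fun m => hf x m
    rw [this]
    have hq : Continuous fun m : Fin k → ℝ => (x - m) ⬝ᵥ (Sig⁻¹ *ᵥ (x - m)) := by
      simp only [dotProduct, mulVec]
      fun_prop
    fun_prop
  have hfd : ∀ (x m : Fin k → ℝ),
      HasFDerivAt (fun x' => f x' m) ((-(f x m)) • ellCLM Sig⁻¹ (x - m)) x := by
    intro x m
    have h := hasFDerivAt_gauss Sig⁻¹ hA
      ((Real.sqrt ((2 * Real.pi) ^ k * Sig.det))⁻¹) m x
    simp only [← hf] at h
    exact h
  obtain ⟨N, hN, ψ, hψint, hψ⟩ := hdom y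
  obtain ⟨ε, εpos, hball⟩ := Metric.mem_nhds_iff.mp hN
  set CA := ∑ i, ∑ l, |Sig⁻¹ i l| with hCAdef
  have hCAnn : 0 ≤ CA := by positivity
  set K := CA * (‖y‖ + ε + 1) with hKdef
  have hKnn : 0 ≤ K := by positivity
  have hxm : ∀ x ∈ Metric.ball y ε, ∀ m : Fin k → ℝ,
      ‖x - m‖ ≤ (‖y‖ + ε + 1) * (1 + ‖m‖) := by
    intro x hx m
    have h2 : ‖x - y‖ < ε := mem_ball_iff_norm.mp hx
    have h3 : ‖x‖ ≤ ‖x - y‖ + ‖y‖ := by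
      calc ‖x‖ = ‖x - y + y‖ := by rw [sub_add_cancel]
        _ ≤ ‖x - y‖ + ‖y‖ := norm_add_le _ _
    have h4 : ‖x - m‖ ≤ ‖x‖ + ‖m‖ := norm_sub_le x m
    nlinarith [norm_nonneg m, norm_nonneg y,
      mul_nonneg (by linarith [norm_nonneg y] : (0:ℝ) ≤ ‖y‖ + ε) (norm_nonneg m)]
  -- generic norm bound on the derivative integrand
  have hbnd : ∀ (c : ℝ), ∀ x ∈ Metric.ball y ε, ∀ m : Fin k → ℝ,
      |c| ≤ (1 + ‖g m‖) * f x m →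
      ‖c • ellCLM Sig⁻¹ (x - m)‖ ≤ K * ψ m := by
    intro c x hx m hc
    have e2 : ‖ellCLM Sig⁻¹ (x - m)‖ ≤ CA * ‖x - m‖ := ellCLM_norm_le _ _
    have e3 := hxm x hx m
    have e4 := hψ x (hball hx) m
    calc ‖c • ellCLM Sig⁻¹ (x - m)‖ ≤ ‖c‖ * ‖ellCLM Sig⁻¹ (x - m)‖ :=
          ContinuousLinearMap.opNorm_smul_le _ _
      _ ≤ ((1 + ‖g m‖) * f x m) * (CA * ((‖y‖ + ε + 1) * (1 + ‖m‖))) := by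
          apply mul_le_mul
          · rw [Real.norm_eq_abs]; exact hc
          · exact le_trans e2 (mul_le_mul_of_nonneg_left e3 hCAnn)
          · exact norm_nonneg _
          · have := fnn x m
            have := norm_nonneg (g m)
            positivity
      _ = K * ((1 + ‖g m‖) * (1 + ‖m‖) * f x m) := by rw [hKdef]; ring
      _ ≤ K * ψ m := mul_le_mul_of_nonneg_left e4 hKnn
  -- pointwise absolute-value bounds
  have habs1 : ∀ (x m : Fin k → ℝ), |(-(f x m))| ≤ (1 + ‖g m‖) * f x m := by
    intro x m
    rw [abs_neg, abs_of_nonneg (fnn x m)]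
    nlinarith [mul_nonneg (norm_nonneg (g m)) (fnn x m)]
  have habs2 : ∀ (i : Fin p) (x m : Fin k → ℝ),
      |(-(g m i * f x m))| ≤ (1 + ‖g m‖) * f x m := by
    intro i x m
    rw [abs_neg, abs_mul, abs_of_nonneg (fnn x m)]
    apply mul_le_mul_of_nonneg_right _ (fnn x m)
    have h1 := norm_le_pi_norm (g m) i
    simp only [Real.norm_eq_abs] at h1
    linarith [norm_nonneg (g m)]
  -- measurability helpers
  have gim : ∀ i, Measurable fun m => g m i := fun i => (measurable_pi_apply i).comp hg
  have hmeas_smul : ∀ (s : (Fin k → ℝ) → ℝ), Measurable s →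
      AEStronglyMeasurable (fun m => s m • ellCLM Sig⁻¹ (y - m)) μ := by
    intro s hs
    apply AEStronglyMeasurable.fun_smul
    · exact hs.aestronglyMeasurable
    · exact ((ellCLM_continuous Sig⁻¹).comp
        (continuous_const.sub continuous_id)).aestronglyMeasurable
  -- pointwise domination at y itself
  have hψy : ∀ m, (1 + ‖g m‖) * (1 + ‖m‖) * f y m ≤ ψ m :=
    fun m => hψ y (mem_of_mem_nhds hN) m
  -- integrability facts
  have hInt_gi : ∀ i, Integrable (fun m => g m i * f y m) μ := by
    intro i
    apply Integrable.mono' hψint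
      (((gim i).fun_mul (fcont y).measurable).aestronglyMeasurable)
    filter_upwards with m
    rw [Real.norm_eq_abs, abs_mul, abs_of_nonneg (fnn y m)]
    have h1 : |g m i| ≤ 1 + ‖g m‖ := by
      have := norm_le_pi_norm (g m) i
      simp only [Real.norm_eq_abs] at this
      linarith [norm_nonneg (g m)]
    calc |g m i| * f y m ≤ (1 + ‖g m‖) * f y m :=
          mul_le_mul_of_nonneg_right h1 (fnn y m)
      _ ≤ (1 + ‖g m‖) * (1 + ‖m‖) * f y m := by
          nlinarith [mul_nonneg (mul_nonneg
            (show (0:ℝ) ≤ 1 + ‖g m‖ by positivity) (fnn y m)) (norm_nonneg m)]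
      _ ≤ ψ m := hψy m
  have hInt_ml : ∀ l : Fin k, Integrable (fun m => m l * f y m) μ := by
    intro l
    apply Integrable.mono' hψint
      (((measurable_pi_apply l).fun_mul (fcont y).measurable).aestronglyMeasurable)
    filter_upwards with m
    rw [Real.norm_eq_abs, abs_mul, abs_of_nonneg (fnn y m)]
    have h1 : |m l| ≤ 1 + ‖m‖ := by
      have := norm_le_pi_norm m l
      simp only [Real.norm_eq_abs] at this
      linarith [norm_nonneg m]
    calc |m l| * f y m ≤ (1 + ‖m‖) * f y m :=
          mul_le_mul_of_nonneg_right h1 (fnn y m)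
      _ ≤ (1 + ‖g m‖) * (1 + ‖m‖) * f y m := by
          nlinarith [mul_nonneg (mul_nonneg
            (show (0:ℝ) ≤ 1 + ‖m‖ by positivity) (fnn y m)) (norm_nonneg (g m))]
      _ ≤ ψ m := hψy m
  have hInt_mgi : ∀ (l : Fin k) (i : Fin p),
      Integrable (fun m => m l * g m i * f y m) μ := by
    intro l i
    apply Integrable.mono' hψint
      ((((measurable_pi_apply l).fun_mul (gim i)).fun_mul (fcont y).measurable).aestronglyMeasurable)
    filter_upwards with m
    rw [Real.norm_eq_abs, abs_mul, abs_mul, abs_of_nonneg (fnn y m)]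
    have h1 : |m l| ≤ 1 + ‖m‖ := by
      have := norm_le_pi_norm m l
      simp only [Real.norm_eq_abs] at this
      linarith [norm_nonneg m]
    have h2 : |g m i| ≤ 1 + ‖g m‖ := by
      have := norm_le_pi_norm (g m) i
      simp only [Real.norm_eq_abs] at this
      linarith [norm_nonneg (g m)]
    have h3 : |m l| * |g m i| ≤ (1 + ‖g m‖) * (1 + ‖m‖) := by
      calc |m l| * |g m i| ≤ (1 + ‖m‖) * (1 + ‖g m‖) :=
            mul_le_mul h1 h2 (abs_nonneg _) (by positivity)
        _ = (1 + ‖g m‖) * (1 + ‖m‖) := by ring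
    calc |m l| * |g m i| * f y m ≤ (1 + ‖g m‖) * (1 + ‖m‖) * f y m :=
          mul_le_mul_of_nonneg_right h3 (fnn y m)
      _ ≤ ψ m := hψy m
  have hInt_phi : Integrable (fun m => (-(f y m)) • ellCLM Sig⁻¹ (y - m)) μ := by
    apply Integrable.mono' (hψint.const_mul K)
      (hmeas_smul _ (fcont y).measurable.neg)
    filter_upwards with m
    exact hbnd _ y (Metric.mem_ball_self εpos) m (habs1 y m)
  have hInt_phig : ∀ i, Integrable
      (fun m => (-(g m i * f y m)) • ellCLM Sig⁻¹ (y - m)) μ := by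
    intro i
    apply Integrable.mono' (hψint.const_mul K)
      (hmeas_smul _ ((gim i).mul (fcont y).measurable).neg)
    filter_upwards with m
    exact hbnd _ y (Metric.mem_ball_self εpos) m (habs2 i y m)
  -- derivative of the denominator integral
  have hfY' : HasFDerivAt (fun x => ∫ m, f x m ∂μ)
      (∫ m, (-(f y m)) • ellCLM Sig⁻¹ (y - m) ∂μ) y := by
    apply hasFDerivAt_integral_of_dominated_of_fderiv_le
      (F' := fun x m => (-(f x m)) • ellCLM Sig⁻¹ (x - m))
      (bound := fun m => K * ψ m) (Metric.ball_mem_nhds y εpos)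
    · exact Filter.Eventually.of_forall fun x => (fcont x).aestronglyMeasurable
    · exact hfYfin y
    · exact hmeas_smul _ (fcont y).measurable.neg
    · filter_upwards with m
      intro x hx
      exact hbnd _ x hx m (habs1 x m)
    · exact hψint.const_mul K
    · filter_upwards with m
      intro x hx
      exact hfd x m
  -- derivative of each numerator integral
  have hGi' : ∀ i, HasFDerivAt (fun x => ∫ m, g m i * f x m ∂μ)
      (∫ m, (-(g m i * f y m)) • ellCLM Sig⁻¹ (y - m) ∂μ) y := by
    intro i
    apply hasFDerivAt_integral_of_dominated_of_fderiv_le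
      (F' := fun x m => (-(g m i * f x m)) • ellCLM Sig⁻¹ (x - m))
      (bound := fun m => K * ψ m) (Metric.ball_mem_nhds y εpos)
    · exact Filter.Eventually.of_forall fun x =>
        ((gim i).mul (fcont x).measurable).aestronglyMeasurable
    · exact hInt_gi i
    · exact hmeas_smul _ ((gim i).mul (fcont y).measurable).neg
    · filter_upwards with m
      intro x hx
      exact hbnd _ x hx m (habs2 i x m)
    · exact hψint.const_mul K
    · filter_upwards with m
      intro x hx
      have h := (hfd x m).const_mul (g m i)
      rw [smul_smul, mul_neg] at h
      exact h
  -- quotient rule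
  set Φ := ∫ m, (-(f y m)) • ellCLM Sig⁻¹ (y - m) ∂μ with hΦdef
  set Γ := fun i => ∫ m, (-(g m i * f y m)) • ellCLM Sig⁻¹ (y - m) ∂μ with hΓdef
  have hTne : (∫ m, f y m ∂μ) ≠ 0 := by
    rw [← hfY y]; exact ne_of_gt (hfYpos y)
  have hinv : HasFDerivAt (fun x => (∫ m, f x m ∂μ)⁻¹)
      ((ContinuousLinearMap.smulRight (1 : ℝ →L[ℝ] ℝ)
        (-((∫ m, f y m ∂μ) ^ 2)⁻¹)).comp Φ) y :=
    (hasFDerivAt_inv hTne).comp y hfY'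
  set D : Fin p → ((Fin k → ℝ) →L[ℝ] ℝ) := fun i =>
    (∫ m, g m i * f y m ∂μ) • ((ContinuousLinearMap.smulRight (1 : ℝ →L[ℝ] ℝ)
        (-((∫ m, f y m ∂μ) ^ 2)⁻¹)).comp Φ)
      + ((∫ m, f y m ∂μ)⁻¹) • Γ i with hDdef
  have hFi : ∀ i, HasFDerivAt (fun x => F x i) (D i) y := by
    intro i
    have hFeq : (fun x => F x i)
        = fun x => (∫ m, g m i * f x m ∂μ) * (∫ m, f x m ∂μ)⁻¹ :=
      funext fun x => by rw [hF x i, hfY x, div_eq_mul_inv]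
    rw [hFeq, hDdef]
    exact (hGi' i).mul hinv
  have hDF : HasFDerivAt F (ContinuousLinearMap.pi D) y := hasFDerivAt_pi.2 hFi
  refine ⟨hDF.differentiableAt, ?_⟩
  intro i j
  rw [hDF.fderiv]
  have happ : (ContinuousLinearMap.pi D) (Pi.single j 1) i = D i (Pi.single j 1) := rfl
  rw [happ]
  -- evaluate the linear functionals on `Pi.single j 1`
  have hell_single : ∀ m : Fin k → ℝ,
      ellCLM Sig⁻¹ (y - m) (Pi.single j 1) = ∑ l, Sig⁻¹ j l * (y l - m l) := by
    intro m
    rw [ellCLM_apply]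
    simp only [Matrix.mulVec_single_one, Matrix.col_apply, dotProduct, Pi.sub_apply, mul_one]
    exact Finset.sum_congr rfl fun l _ => by rw [hA.apply j l]; ring
  have hΦapp : Φ (Pi.single j 1)
      = ∑ l, Sig⁻¹ j l * ((∫ m, m l * f y m ∂μ) - y l * (∫ m, f y m ∂μ)) := by
    rw [hΦdef, ContinuousLinearMap.integral_apply hInt_phi]
    have heq : (fun m => ((-(f y m)) • ellCLM Sig⁻¹ (y - m)) (Pi.single j 1))
        = fun m => ∑ l, Sig⁻¹ j l * (m l * f y m - y l * f y m) := by
      funext m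
      rw [ContinuousLinearMap.smul_apply, hell_single m, smul_eq_mul, Finset.mul_sum]
      exact Finset.sum_congr rfl fun l _ => by ring
    rw [heq, integral_finset_sum Finset.univ
      (f := fun (l : Fin k) (m : Fin k → ℝ) => Sig⁻¹ j l * (m l * f y m - y l * f y m))
      (fun l _ => ((hInt_ml l).sub ((hfYfin y).const_mul (y l))).const_mul _)]
    refine Finset.sum_congr rfl fun l _ => ?_
    rw [integral_const_mul]
    congr 1
    rw [integral_sub (hInt_ml l) ((hfYfin y).const_mul (y l)), integral_const_mul]
  have hΓapp : ∀ i, Γ i (Pi.single j 1)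
      = ∑ l, Sig⁻¹ j l * ((∫ m, m l * g m i * f y m ∂μ)
          - y l * (∫ m, g m i * f y m ∂μ)) := by
    intro i
    rw [hΓdef, ContinuousLinearMap.integral_apply (hInt_phig i)]
    have heq : (fun m => ((-(g m i * f y m)) • ellCLM Sig⁻¹ (y - m)) (Pi.single j 1))
        = fun m => ∑ l, Sig⁻¹ j l * (m l * g m i * f y m - y l * (g m i * f y m)) := by
      funext m
      rw [ContinuousLinearMap.smul_apply, hell_single m, smul_eq_mul, Finset.mul_sum]
      exact Finset.sum_congr rfl fun l _ => by ring
    rw [heq, integral_finset_sum Finset.univ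
      (f := fun (l : Fin k) (m : Fin k → ℝ) =>
        Sig⁻¹ j l * (m l * g m i * f y m - y l * (g m i * f y m)))
      (fun l _ => ((hInt_mgi l i).sub ((hInt_gi i).const_mul (y l))).const_mul _)]
    refine Finset.sum_congr rfl fun l _ => ?_
    rw [integral_const_mul]
    congr 1
    rw [integral_sub (hInt_mgi l i) ((hInt_gi i).const_mul (y l)), integral_const_mul]
  rw [hDdef]
  simp only [ContinuousLinearMap.add_apply, ContinuousLinearMap.smul_apply,
    ContinuousLinearMap.comp_apply, ContinuousLinearMap.smulRight_apply,
    ContinuousLinearMap.one_apply, smul_eq_mul]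
  rw [hΦapp, hΓapp i]
  simp only [hfY y]
  rw [Finset.sum_mul, Finset.mul_sum, Finset.mul_sum, ← Finset.sum_add_distrib]
  refine Finset.sum_congr rfl fun l _ => ?_
  field_simp
  ring
end

section
/- (Gaussian example, zero mean and unknown covariance.) Let μ be a probability measure on the set of symmetric positive definite k×k real matrices (the prior law of the covariance S). Let f(y|S) = ((2π)^k det S)^{-1/2} exp(−(1/2) yᵀ S^{-1} y) be the N(0, S) density, let f_Y(y) = ∫ f(y|S) dμ(S), and assume 0 < f_Y(y) < ∞ for all y ∈ ℝ^k. Let g be a measurable map from positive definite matrices to ℝ^p (g(S) represents E[U|S] for a Markov chain U ↔ S ↔ Y), and assume that for every y there exist a neighborhood N of y and a μ-integrable ψ with (1 + ‖g(S)‖)(1 + ‖S^{-1}‖) f(y'|S) ≤ ψ(S) for all y' ∈ N and all S. Then F(y) := E[g(S)|Y=y] is differentiable and for every y, i ∈ {1,…,p}, j ∈ {1,…,k}: ∂F_i/∂y_j (y) = − Σ_{a=1}^k y_a · Cov( (S^{-1})_{a,j}, g_i(S) | Y = y ); equivalently, in the paper's notation, J_y E[U|Y=y] = −(1/2)( yᵀ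 ⊗ I_k + I_k ⊗ yᵀ ) Cov( vec(S^{-1}), U | Y=y ). -/
open MeasureTheory Matrix


private lemma meas_inv_entry {k : ℕ} (a b : Fin k) :
    Measurable (fun S : Fin k → Fin k → ℝ => (Matrix.of S)⁻¹ a b) := by
  have hdet : Measurable (fun S : Fin k → Fin k → ℝ => (Matrix.of S).det) :=
    (Continuous.matrix_det (continuous_id (X := Fin k → Fin k → ℝ))).measurable
  have hadj : Measurable (fun S : Fin k → Fin k → ℝ => (Matrix.of S).adjugate a b) := by
    have h1 : Continuous (fun S : Fin k → Fin k → ℝ => (Matrix.of S).adjugate) :=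
      Continuous.matrix_adjugate (continuous_id (X := Fin k → Fin k → ℝ))
    exact (((continuous_apply b).comp ((continuous_apply a).comp h1))).measurable
  have heq : (fun S : Fin k → Fin k → ℝ => (Matrix.of S)⁻¹ a b)
      = fun S => ((Matrix.of S).det)⁻¹ * (Matrix.of S).adjugate a b := by
    funext S
    rw [Matrix.inv_def, Matrix.smul_apply, Ring.inverse_eq_inv', smul_eq_mul]
  rw [heq]
  exact hdet.inv.mul hadj

private lemma meas_f {k : ℕ}
    {f : (Fin k → ℝ) → (Fin k → Fin k → ℝ) → ℝ}
    (hf : ∀ y S, f y S =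
      (Real.sqrt ((2 * Real.pi) ^ k * (Matrix.of S).det))⁻¹ *
        Real.exp (-(1 / 2) * (y ⬝ᵥ ((Matrix.of S)⁻¹ *ᵥ y))))
    (y : Fin k → ℝ) : Measurable (fun S => f y S) := by
  have hdet : Measurable (fun S : Fin k → Fin k → ℝ => (Matrix.of S).det) :=
    (Continuous.matrix_det (continuous_id (X := Fin k → Fin k → ℝ))).measurable
  simp only [hf]
  apply Measurable.mul
  · exact ((measurable_const.mul hdet).sqrt).inv
  · apply Measurable.exp
    apply Measurable.const_mul
    simp only [dotProduct, Matrix.mulVec, dotProduct]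
    exact Finset.measurable_sum _ fun a _ => Measurable.const_mul
      (Finset.measurable_sum _ fun b _ => (meas_inv_entry a b).mul_const _) _

private lemma f_nonneg {k : ℕ}
    {f : (Fin k → ℝ) → (Fin k → Fin k → ℝ) → ℝ}
    (hf : ∀ y S, f y S =
      (Real.sqrt ((2 * Real.pi) ^ k * (Matrix.of S).det))⁻¹ *
        Real.exp (-(1 / 2) * (y ⬝ᵥ ((Matrix.of S)⁻¹ *ᵥ y))))
    (y : Fin k → ℝ) (S : Fin k → Fin k → ℝ) : 0 ≤ f y S := by
  rw [hf]
  positivity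


private lemma key_alg {k : ℕ} (y₀ : Fin k → ℝ) (j : Fin k)
    (M : Matrix (Fin k) (Fin k) ℝ) (hM : ∀ a b, M a b = M b a) (r : ℝ) :
    (r * (-(1/2:ℝ))) * (∑ a, ∑ b, M a b *
        (y₀ a * ((Pi.single j 1 : Fin k → ℝ) b) + y₀ b * ((Pi.single j 1 : Fin k → ℝ) a)))
      = ∑ a, -(y₀ a * (M a j * r)) := by
  have expand : ∀ a b : Fin k, M a b * (y₀ a * (Pi.single j 1 : Fin k → ℝ) b + y₀ b * (Pi.single j 1 : Fin k → ℝ) a)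
      = M a b * y₀ a * (Pi.single j 1 : Fin k → ℝ) b + M a b * y₀ b * (Pi.single j 1 : Fin k → ℝ) a :=
    fun a b => by ring
  simp only [expand, Finset.sum_add_distrib]
  have e1 : ∀ a : Fin k, (∑ b, M a b * y₀ a * (Pi.single j 1 : Fin k → ℝ) b) = M a j * y₀ a := by
    intro a
    rw [Finset.sum_eq_single j (fun b _ hb => by simp [Pi.single_eq_of_ne hb])
      (fun h => absurd (Finset.mem_univ j) h)]
    simp
  have e2 : (∑ a, ∑ b, M a b * y₀ b * (Pi.single j 1 : Fin k → ℝ) a) = ∑ b, M j b * y₀ b := by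
    have h3 : ∀ a : Fin k, (∑ b, M a b * y₀ b * (Pi.single j 1 : Fin k → ℝ) a)
        = (∑ b, M a b * y₀ b) * (Pi.single j 1 : Fin k → ℝ) a := fun a => (Finset.sum_mul _ _ _).symm
    simp only [h3]
    rw [Finset.sum_eq_single j (fun a _ ha => by simp [Pi.single_eq_of_ne ha])
      (fun h => absurd (Finset.mem_univ j) h)]
    simp
  simp only [e1, e2]
  have hMj : ∀ b, M j b = M b j := fun b => hM j b
  simp only [hMj]
  rw [← Finset.sum_add_distrib, Finset.mul_sum]
  exact Finset.sum_congr rfl fun a _ => by ring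

private lemma alg {k : ℕ} (y : Fin k → ℝ) (P Q : Fin k → ℝ) (N d : ℝ) (hd : d ≠ 0) :
    N * (-(d^2)⁻¹ * -(∑ a, y a * Q a)) + d⁻¹ * -(∑ a, y a * P a)
      = -∑ a, y a * (P a / d - Q a / d * (N / d)) := by
  have h : ∀ a ∈ Finset.univ, y a * (P a / d - Q a / d * (N / d))
      = (y a * P a) * d⁻¹ - (y a * Q a) * (N * ((d)^2)⁻¹) := fun a _ => by
    field_simp
  rw [Finset.sum_congr rfl h, Finset.sum_sub_distrib, ← Finset.sum_mul, ← Finset.sum_mul]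
  ring

set_option maxHeartbeats 2000000 in
private lemma gauss_aux {k : ℕ} {μ : Measure (Fin k → Fin k → ℝ)} [IsProbabilityMeasure μ]
    {f : (Fin k → ℝ) → (Fin k → Fin k → ℝ) → ℝ}
    (hf : ∀ y S, f y S =
      (Real.sqrt ((2 * Real.pi) ^ k * (Matrix.of S).det))⁻¹ *
        Real.exp (-(1 / 2) * (y ⬝ᵥ ((Matrix.of S)⁻¹ *ᵥ y))))
    (hsupp : ∀ᵐ S ∂μ, (Matrix.of S).PosDef)
    {G : (Fin k → Fin k → ℝ) → ℝ} (hG : Measurable G)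
    (y₀ : Fin k → ℝ) {ε : ℝ} (hε : 0 < ε)
    {ψ : (Fin k → Fin k → ℝ) → ℝ} (hψ : Integrable ψ μ)
    (hb : ∀ y' ∈ Metric.ball y₀ ε, ∀ S,
      |G S| * (1 + Real.sqrt (∑ a, ∑ b, ((Matrix.of S)⁻¹ a b) ^ 2)) * f y' S ≤ ψ S) :
    ∃ L : (Fin k → ℝ) →L[ℝ] ℝ,
      HasFDerivAt (fun y => ∫ S, G S * f y S ∂μ) L y₀ ∧
      ∀ j : Fin k, L (Pi.single j 1) =
        -∑ a, y₀ a * ∫ S, ((Matrix.of S)⁻¹ a j * G S) * f y₀ S ∂μ := by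
  classical
  set Fr : (Fin k → Fin k → ℝ) → ℝ :=
    fun S => Real.sqrt (∑ a, ∑ b, ((Matrix.of S)⁻¹ a b) ^ 2) with hFr
  -- the candidate derivative
  set D : (Fin k → ℝ) → (Fin k → Fin k → ℝ) → ((Fin k → ℝ) →L[ℝ] ℝ) :=
    fun y S => (G S * f y S * (-(1/2))) •
      ∑ a, ∑ b, (Matrix.of S)⁻¹ a b •
        (y a • (ContinuousLinearMap.proj b : (Fin k → ℝ) →L[ℝ] ℝ)
          + y b • (ContinuousLinearMap.proj a : (Fin k → ℝ) →L[ℝ] ℝ)) with hD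
  -- pointwise differentiability
  have hderiv : ∀ (S : Fin k → Fin k → ℝ) (y : Fin k → ℝ),
      HasFDerivAt (fun y => G S * f y S) (D y S) y := by
    intro S y
    have hq : HasFDerivAt (fun y : Fin k → ℝ => y ⬝ᵥ ((Matrix.of S)⁻¹ *ᵥ y))
        (∑ a, ∑ b, (Matrix.of S)⁻¹ a b •
          (y a • (ContinuousLinearMap.proj b : (Fin k → ℝ) →L[ℝ] ℝ)
            + y b • (ContinuousLinearMap.proj a : (Fin k → ℝ) →L[ℝ] ℝ))) y := by
      have h2 : HasFDerivAt
          (fun y : Fin k → ℝ => ∑ a, ∑ b, (Matrix.of S)⁻¹ a b * (y a * y b))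
          (∑ a, ∑ b, (Matrix.of S)⁻¹ a b •
            (y a • (ContinuousLinearMap.proj b : (Fin k → ℝ) →L[ℝ] ℝ)
              + y b • (ContinuousLinearMap.proj a : (Fin k → ℝ) →L[ℝ] ℝ))) y :=
        HasFDerivAt.fun_sum fun a _ => HasFDerivAt.fun_sum fun b _ =>
          ((hasFDerivAt_apply a y).mul (hasFDerivAt_apply b y)).const_mul _
      have hfun : (fun y : Fin k → ℝ => y ⬝ᵥ ((Matrix.of S)⁻¹ *ᵥ y))
          = fun y : Fin k → ℝ => ∑ a, ∑ b, (Matrix.of S)⁻¹ a b * (y a * y b) := by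
        funext v
        simp only [dotProduct, Matrix.mulVec, dotProduct, Finset.mul_sum]
        exact Finset.sum_congr rfl fun a _ => Finset.sum_congr rfl fun b _ => by ring
      rw [hfun]
      exact h2
    have h4 := ((hq.const_mul (-(1/2) : ℝ)).exp.const_mul
      ((Real.sqrt ((2 * Real.pi) ^ k * (Matrix.of S).det))⁻¹)).const_mul (G S)
    have hfun2 : (fun y : Fin k → ℝ => G S * f y S)
        = fun y : Fin k → ℝ => G S *
            ((Real.sqrt ((2 * Real.pi) ^ k * (Matrix.of S).det))⁻¹ *
              Real.exp (-(1/2) * (y ⬝ᵥ ((Matrix.of S)⁻¹ *ᵥ y)))) := by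
      funext v; rw [hf]
    rw [hfun2]
    refine h4.congr_fderiv ?_
    symm
    rw [hD]
    simp only [smul_smul]
    congr 1
    rw [hf]
    ring
  -- norm bound on the ball
  have hentry : ∀ (S : Fin k → Fin k → ℝ) (a b : Fin k), |(Matrix.of S)⁻¹ a b| ≤ Fr S := by
    intro S a b
    rw [hFr, ← Real.sqrt_sq_eq_abs]
    apply Real.sqrt_le_sqrt
    calc ((Matrix.of S)⁻¹ a b) ^ 2
        ≤ ∑ b', ((Matrix.of S)⁻¹ a b') ^ 2 :=
          Finset.single_le_sum (f := fun b' => ((Matrix.of S)⁻¹ a b') ^ 2)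
            (fun c _ => sq_nonneg _) (Finset.mem_univ b)
      _ ≤ ∑ a', ∑ b', ((Matrix.of S)⁻¹ a' b') ^ 2 :=
          Finset.single_le_sum (f := fun a' => ∑ b', ((Matrix.of S)⁻¹ a' b') ^ 2)
            (fun c _ => Finset.sum_nonneg fun d _ => sq_nonneg _) (Finset.mem_univ a)
  have hFrnn : ∀ S, 0 ≤ Fr S := fun S => Real.sqrt_nonneg _
  have hbnd : ∀ (S : Fin k → Fin k → ℝ), ∀ x ∈ Metric.ball y₀ ε,
      ‖D x S‖ ≤ ((‖y₀‖ + ε) * (k:ℝ)^2) * ψ S := by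
    intro S x hx
    have hxnorm : ‖x‖ ≤ ‖y₀‖ + ε := by
      have h1 : ‖x - y₀‖ < ε := mem_ball_iff_norm.mp hx
      have h2 : ‖x‖ - ‖y₀‖ ≤ ‖x - y₀‖ := norm_sub_norm_le x y₀
      linarith
    have hxa : ∀ a, |x a| ≤ ‖y₀‖ + ε := by
      intro a
      calc |x a| = ‖x a‖ := (Real.norm_eq_abs _).symm
        _ ≤ ‖x‖ := norm_le_pi_norm x a
        _ ≤ ‖y₀‖ + ε := hxnorm
    have hproj : ∀ c : Fin k, ‖(ContinuousLinearMap.proj c : (Fin k → ℝ) →L[ℝ] ℝ)‖ ≤ 1 :=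
      fun c => ContinuousLinearMap.opNorm_le_bound _ zero_le_one fun v => by
        rw [one_mul]; exact norm_le_pi_norm v c
    have hR0 : (0:ℝ) ≤ ‖y₀‖ + ε := by positivity
    have h1 : ‖∑ a, ∑ b, (Matrix.of S)⁻¹ a b •
        (x a • (ContinuousLinearMap.proj b : (Fin k → ℝ) →L[ℝ] ℝ)
          + x b • (ContinuousLinearMap.proj a : (Fin k → ℝ) →L[ℝ] ℝ))‖
        ≤ ∑ a : Fin k, ∑ b : Fin k, Fr S * (2 * (‖y₀‖ + ε)) := by
      refine (norm_sum_le _ _).trans (Finset.sum_le_sum fun a _ => ?_)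
      refine (norm_sum_le _ _).trans (Finset.sum_le_sum fun b _ => ?_)
      refine le_trans (norm_smul_le ((Matrix.of S)⁻¹ a b)
        (x a • (ContinuousLinearMap.proj b : (Fin k → ℝ) →L[ℝ] ℝ)
          + x b • (ContinuousLinearMap.proj a : (Fin k → ℝ) →L[ℝ] ℝ))) ?_
      rw [Real.norm_eq_abs]
      refine mul_le_mul (hentry S a b) ?_ (norm_nonneg _) (hFrnn S)
      refine (norm_add_le _ _).trans ?_
      have ha' : ‖x a • (ContinuousLinearMap.proj b : (Fin k → ℝ) →L[ℝ] ℝ)‖ ≤ (‖y₀‖+ε) * 1 :=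
        le_trans (norm_smul_le (x a) (ContinuousLinearMap.proj b : (Fin k → ℝ) →L[ℝ] ℝ)) (by
          rw [Real.norm_eq_abs]
          exact mul_le_mul (hxa a) (hproj b) (norm_nonneg _) hR0)
      have hb' : ‖x b • (ContinuousLinearMap.proj a : (Fin k → ℝ) →L[ℝ] ℝ)‖ ≤ (‖y₀‖+ε) * 1 :=
        le_trans (norm_smul_le (x b) (ContinuousLinearMap.proj a : (Fin k → ℝ) →L[ℝ] ℝ)) (by
          rw [Real.norm_eq_abs]
          exact mul_le_mul (hxa b) (hproj a) (norm_nonneg _) hR0)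
      have := add_le_add ha' hb'
      linarith only [this]
    have hcard : (∑ a : Fin k, ∑ b : Fin k, Fr S * (2 * (‖y₀‖ + ε)))
        = (k:ℝ)^2 * (Fr S * (2 * (‖y₀‖ + ε))) := by
      simp only [Finset.sum_const, Finset.card_univ, Fintype.card_fin, smul_eq_mul]
      push_cast
      ring
    have h6 : ‖D x S‖ ≤ (|G S| * f x S * (1/2)) * ((k:ℝ)^2 * (Fr S * (2 * (‖y₀‖ + ε)))) := by
      have hDx : ‖D x S‖ ≤ |G S * f x S * (-(1/2))| * ‖∑ a, ∑ b, (Matrix.of S)⁻¹ a b •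
          (x a • (ContinuousLinearMap.proj b : (Fin k → ℝ) →L[ℝ] ℝ)
            + x b • (ContinuousLinearMap.proj a : (Fin k → ℝ) →L[ℝ] ℝ))‖ := by
        simp only [hD]
        refine le_trans (norm_smul_le (G S * f x S * (-(1/2)))
          (∑ a, ∑ b, (Matrix.of S)⁻¹ a b •
            (x a • (ContinuousLinearMap.proj b : (Fin k → ℝ) →L[ℝ] ℝ)
              + x b • (ContinuousLinearMap.proj a : (Fin k → ℝ) →L[ℝ] ℝ)))) (le_of_eq ?_)
        rw [Real.norm_eq_abs]
      refine hDx.trans ?_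
      have habs : |G S * f x S * (-(1/2))| = |G S| * f x S * (1/2) := by
        rw [abs_mul, abs_mul, abs_of_nonneg (f_nonneg hf x S)]
        norm_num
      rw [habs]
      refine mul_le_mul_of_nonneg_left ?_
        (mul_nonneg (mul_nonneg (abs_nonneg _) (f_nonneg hf x S)) (by norm_num))
      rw [← hcard]
      exact h1
    refine h6.trans ?_
    have h7 : |G S| * f x S * (1/2) * ((k:ℝ)^2 * (Fr S * (2 * (‖y₀‖ + ε))))
        = ((‖y₀‖ + ε) * (k:ℝ)^2) * (|G S| * Fr S * f x S) := by ring
    rw [h7]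
    refine mul_le_mul_of_nonneg_left ?_ (by positivity)
    have h8 : |G S| * Fr S * f x S ≤ |G S| * (1 + Fr S) * f x S := by
      nlinarith [mul_nonneg (abs_nonneg (G S)) (f_nonneg hf x S)]
    exact h8.trans (hb x hx S)
  -- measurability of the derivative
  have hDmeas : AEStronglyMeasurable (fun S => D y₀ S) μ := by
    have hDrw : (fun S => D y₀ S) = fun S => ∑ a, ∑ b,
        ((G S * f y₀ S * (-(1/2))) * (Matrix.of S)⁻¹ a b) •
          (y₀ a • (ContinuousLinearMap.proj b : (Fin k → ℝ) →L[ℝ] ℝ)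
            + y₀ b • (ContinuousLinearMap.proj a : (Fin k → ℝ) →L[ℝ] ℝ)) := by
      funext S
      rw [hD]
      simp only [Finset.smul_sum, smul_smul]
    rw [hDrw]
    refine Finset.aestronglyMeasurable_fun_sum _ fun a _ => Finset.aestronglyMeasurable_fun_sum _ fun b _ => ?_
    exact (((((hG.mul (meas_f hf y₀)).mul_const _).mul
      (meas_inv_entry a b))).aestronglyMeasurable).smul_const _
  -- integrability of the integrand at y₀
  have hy₀ball : y₀ ∈ Metric.ball y₀ ε := Metric.mem_ball_self hε
  have hGfint : ∀ y' ∈ Metric.ball y₀ ε, Integrable (fun S => G S * f y' S) μ := by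
    intro y' hy'
    refine Integrable.mono hψ ((hG.mul (meas_f hf y')).aestronglyMeasurable)
      (Filter.Eventually.of_forall fun S => ?_)
    have h1 : ‖G S * f y' S‖ = |G S| * f y' S := by
      rw [Real.norm_eq_abs, abs_mul, abs_of_nonneg (f_nonneg hf y' S)]
    rw [h1]
    have h2 : |G S| * f y' S ≤ |G S| * (1 + Fr S) * f y' S := by
      nlinarith [mul_nonneg (mul_nonneg (abs_nonneg (G S)) (hFrnn S)) (f_nonneg hf y' S)]
    exact (h2.trans (hb y' hy' S)).trans (le_abs_self _)
  -- apply the dominated differentiation theorem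
  have hmain := hasFDerivAt_integral_of_dominated_of_fderiv_le (𝕜 := ℝ)
    (F := fun y S => G S * f y S) (F' := fun y S => D y S) (x₀ := y₀)
    (bound := fun S => ((‖y₀‖ + ε) * (k:ℝ)^2) * ψ S) (Metric.ball_mem_nhds y₀ hε)
    (Filter.Eventually.of_forall fun x => (hG.mul (meas_f hf x)).aestronglyMeasurable)
    (hGfint y₀ hy₀ball) hDmeas
    (Filter.Eventually.of_forall fun S x hx => hbnd S x hx)
    (hψ.const_mul _)
    (Filter.Eventually.of_forall fun S x _ => hderiv S x)
  refine ⟨_, hmain, ?_⟩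
  -- evaluation at Pi.single j 1
  intro j
  have hDint : Integrable (fun S => D y₀ S) μ :=
    Integrable.mono' (hψ.const_mul _) hDmeas
      (Filter.Eventually.of_forall fun S => hbnd S y₀ hy₀ball)
  rw [ContinuousLinearMap.integral_apply hDint]
  have heval : ∀ᵐ S ∂μ, D y₀ S (Pi.single j 1)
      = ∑ a, -(y₀ a * ((Matrix.of S)⁻¹ a j * (G S * f y₀ S))) := by
    filter_upwards [hsupp] with S hS
    have hsym : ∀ a b, (Matrix.of S)⁻¹ a b = (Matrix.of S)⁻¹ b a := by
      intro a b
      conv_lhs => rw [← hS.isHermitian.inv]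
      simp [Matrix.conjTranspose_apply]
    have happ : D y₀ S (Pi.single j 1)
        = ((G S * f y₀ S) * (-(1/2))) * (∑ a, ∑ b, (Matrix.of S)⁻¹ a b *
            (y₀ a * ((Pi.single j 1 : Fin k → ℝ) b) + y₀ b * ((Pi.single j 1 : Fin k → ℝ) a))) := by
      rw [hD]
      simp only [ContinuousLinearMap.smul_apply, ContinuousLinearMap.coe_sum',
        Finset.sum_apply, ContinuousLinearMap.add_apply, ContinuousLinearMap.smul_apply,
        ContinuousLinearMap.proj_apply, smul_eq_mul, mul_assoc]
    rw [happ, key_alg y₀ j _ hsym (G S * f y₀ S)]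
  rw [integral_congr_ae heval]
  have hint : ∀ a : Fin k, Integrable (fun S => ((Matrix.of S)⁻¹ a j * G S) * f y₀ S) μ := by
    intro a
    refine Integrable.mono hψ
      ((((meas_inv_entry a j).mul hG).mul (meas_f hf y₀)).aestronglyMeasurable)
      (Filter.Eventually.of_forall fun S => ?_)
    have h1 : ‖(Matrix.of S)⁻¹ a j * G S * f y₀ S‖
        ≤ Fr S * |G S| * f y₀ S := by
      rw [Real.norm_eq_abs, abs_mul, abs_mul, abs_of_nonneg (f_nonneg hf y₀ S)]
      exact mul_le_mul_of_nonneg_right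
        (mul_le_mul_of_nonneg_right (hentry S a j) (abs_nonneg _)) (f_nonneg hf y₀ S)
    refine h1.trans ?_
    have h2 : Fr S * |G S| * f y₀ S ≤ |G S| * (1 + Fr S) * f y₀ S := by
      nlinarith [mul_nonneg (abs_nonneg (G S)) (f_nonneg hf y₀ S)]
    exact (h2.trans (hb y₀ hy₀ball S)).trans (le_abs_self _)
  have hshape : ∀ S : Fin k → Fin k → ℝ,
      (∑ a, -(y₀ a * ((Matrix.of S)⁻¹ a j * (G S * f y₀ S))))
        = ∑ a, (-(y₀ a)) * (((Matrix.of S)⁻¹ a j * G S) * f y₀ S) :=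
    fun S => Finset.sum_congr rfl fun a _ => by ring
  simp only [hshape]
  rw [integral_finset_sum _ (fun a _ => (hint a).const_mul _)]
  simp only [integral_const_mul]
  rw [← Finset.sum_neg_distrib]
  exact Finset.sum_congr rfl fun a _ => by ring

set_option maxHeartbeats 1000000 in
/-- Gaussian example with zero mean and unknown covariance:
`∂F_i/∂y_j (y) = − Σ_a y_a · Cov((S⁻¹)_{a,j}, g_i(S) | Y = y)`. The prior is
a probability measure on (the functions representing) symmetric positive
definite matrices. -/
theorem stmt_16
    {k p : ℕ}
    (μ : Measure (Fin k → Fin k → ℝ)) [IsProbabilityMeasure μ]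
    (hsupp : ∀ᵐ S ∂μ, (Matrix.of S).PosDef)
    (f : (Fin k → ℝ) → (Fin k → Fin k → ℝ) → ℝ)
    (hf : ∀ y S, f y S =
      (Real.sqrt ((2 * Real.pi) ^ k * (Matrix.of S).det))⁻¹ *
        Real.exp (-(1 / 2) * (y ⬝ᵥ ((Matrix.of S)⁻¹ *ᵥ y))))
    (fY : (Fin k → ℝ) → ℝ)
    (hfY : ∀ y, fY y = ∫ S, f y S ∂μ)
    (hfYpos : ∀ y, 0 < fY y)
    (hfYfin : ∀ y, Integrable (fun S => f y S) μ)
    (g : (Fin k → Fin k → ℝ) → (Fin p → ℝ)) (hg : Measurable g)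
    (hdom : ∀ y : Fin k → ℝ, ∃ N ∈ nhds y, ∃ ψ : (Fin k → Fin k → ℝ) → ℝ,
      Integrable ψ μ ∧ ∀ y' ∈ N, ∀ S,
        (1 + ‖g S‖) * (1 + Real.sqrt (∑ a, ∑ b, ((Matrix.of S)⁻¹ a b) ^ 2))
          * f y' S ≤ ψ S)
    (F : (Fin k → ℝ) → (Fin p → ℝ))
    (hF : ∀ y i, F y i = (∫ S, g S i * f y S ∂μ) / fY y) :
    ∀ y : Fin k → ℝ,
      DifferentiableAt ℝ F y ∧
      ∀ (i : Fin p) (j : Fin k),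
        fderiv ℝ F y (Pi.single j 1) i =
          - ∑ a, y a *
            ((∫ S, (Matrix.of S)⁻¹ a j * g S i * f y S ∂μ) / fY y
              - ((∫ S, (Matrix.of S)⁻¹ a j * f y S ∂μ) / fY y)
                * ((∫ S, g S i * f y S ∂μ) / fY y)) := by
  intro y₀
  obtain ⟨N, hN, ψ, hψint, hψb⟩ := hdom y₀
  obtain ⟨ε, hε, hball⟩ := Metric.mem_nhds_iff.mp hN
  have hfY0 : fY y₀ ≠ 0 := ne_of_gt (hfYpos y₀)
  -- numerator derivatives
  have hnum : ∀ i : Fin p, ∃ L : (Fin k → ℝ) →L[ℝ] ℝ,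
      HasFDerivAt (fun y => ∫ S, g S i * f y S ∂μ) L y₀ ∧
      ∀ j : Fin k, L (Pi.single j 1) =
        -∑ a, y₀ a * ∫ S, ((Matrix.of S)⁻¹ a j * g S i) * f y₀ S ∂μ := by
    intro i
    refine gauss_aux hf hsupp ((measurable_pi_apply i).comp hg) y₀ hε hψint ?_
    intro y' hy' S
    refine le_trans ?_ (hψb y' (hball hy') S)
    have h1 : |g S i| ≤ 1 + ‖g S‖ := by
      have h2 : |g S i| ≤ ‖g S‖ := by
        rw [← Real.norm_eq_abs]
        exact norm_le_pi_norm (g S) i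
      linarith [norm_nonneg (g S)]
    refine mul_le_mul_of_nonneg_right (mul_le_mul_of_nonneg_right h1 ?_) (f_nonneg hf y' S)
    positivity
  -- denominator derivative
  obtain ⟨Lden, hLden, hLdenEval⟩ :=
    gauss_aux (μ := μ) hf hsupp (G := fun _ => (1:ℝ)) measurable_const y₀ hε hψint
      (by
        intro y' hy' S
        refine le_trans ?_ (hψb y' (hball hy') S)
        have h1 : |(1:ℝ)| ≤ 1 + ‖g S‖ := by
          rw [abs_one]; linarith [norm_nonneg (g S)]
        refine mul_le_mul_of_nonneg_right (mul_le_mul_of_nonneg_right h1 ?_) (f_nonneg hf y' S)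
        positivity)
  have hfYfun : (fun y => ∫ S, (fun _ : Fin k → Fin k → ℝ => (1:ℝ)) S * f y S ∂μ) = fY := by
    funext y
    rw [hfY y]
    simp
  rw [hfYfun] at hLden
  choose Lnum hLnum hLnumEval using hnum
  -- derivative of the inverse of the denominator
  have hinv : HasFDerivAt (fun y => (fY y)⁻¹) ((-(fY y₀ ^ 2)⁻¹) • Lden) y₀ :=
    (hasDerivAt_inv hfY0).comp_hasFDerivAt y₀ hLden
  have hcomp : ∀ i : Fin p, HasFDerivAt (fun y => (∫ S, g S i * f y S ∂μ) * (fY y)⁻¹)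
      ((∫ S, g S i * f y₀ S ∂μ) • ((-(fY y₀ ^ 2)⁻¹) • Lden) + (fY y₀)⁻¹ • Lnum i) y₀ :=
    fun i => (hLnum i).mul hinv
  have hFeq : F = fun y => fun i => (∫ S, g S i * f y S ∂μ) * (fY y)⁻¹ := by
    funext y i
    rw [hF y i, div_eq_mul_inv]
  have htot : HasFDerivAt F (ContinuousLinearMap.pi fun i =>
      (∫ S, g S i * f y₀ S ∂μ) • ((-(fY y₀ ^ 2)⁻¹) • Lden) + (fY y₀)⁻¹ • Lnum i) y₀ := by
    rw [hFeq]
    exact hasFDerivAt_pi.mpr hcomp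
  refine ⟨htot.differentiableAt, ?_⟩
  intro i j
  rw [htot.fderiv]
  rw [ContinuousLinearMap.pi_apply, ContinuousLinearMap.add_apply,
    ContinuousLinearMap.smul_apply, ContinuousLinearMap.smul_apply,
    ContinuousLinearMap.smul_apply, hLdenEval j, hLnumEval i j]
  simp only [smul_eq_mul, mul_one]
  have hgoal := alg y₀
    (fun a => ∫ S, ((Matrix.of S)⁻¹ a j * g S i) * f y₀ S ∂μ)
    (fun a => ∫ S, ((Matrix.of S)⁻¹ a j) * f y₀ S ∂μ)
    (∫ S, g S i * f y₀ S ∂μ) (fY y₀) hfY0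
  rw [← hgoal]
end
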